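/- arXiv:math/0103008 — 2 statements merged into one kernel-verified Lean document; each statement's English description precedes it below -/
import Mathlib

section
/- Let B₁, B₂ be normal crystals. Suppose the set B₁ × B₂ (elements written b₁ ⊗ b₂) is given a normal crystal structure such that: (a) wt(b₁ ⊗ b₂) = wt(b₁) + wt(b₂) for all b₁ ∈ B₁, b₂ ∈ B₂; and (b) whenever ε_k(b₁ ⊗ b₂) = 0 one has ε_k(b₁ ⊗ b₂) = max(ε_k(b₁), ε_k(b₂) − wt_k(b₁)), ẽ_k(b₁ ⊗ b₂) = (ẽ_k b₁) ⊗ b₂ if φ_k(b₁) ≥ ε_k(b₂) and b₁ ⊗ (ẽ_k b₂) otherwise, and for every r ≥ 0: f̃_k^r(b₁ ⊗ b₂) = (f̃_k^r b₁) ⊗ b₂ if r ≤ wt_k(b₁) − ε_k(b₂), and f̃_k^r(b₁ ⊗ b₂) = (f̃_k^{wt_k(b₁) − ε_k(b₂)} b₁) ⊗ (f̃_k^{r − wt_k(b₁) + ε_k(b₂)} b₂) otherwise. Then this crystal structure coincides with the tensor product crystal structure of B₁ ⊗ B₂: all of wt, ε_k, φ_k, ẽ_k, f̃_k agree with those of B₁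 ⊗ B₂. -/
/-!
Crystals associated with a root datum: a free `ℤ`-module `P` (weight lattice),
simple roots `α k ∈ P` and simple coroots `co k : P →+ ℤ` for `k` in an index
set `I`.  The string functions `ε, φ` take values in `ℤ ∪ {−∞}`, modeled by
`WithBot ℤ`, and the Kashiwara operators `ẽ, f̃` take values in `B ⊔ {0}`,
modeled by `Option B` (`none` playing the role of `0`).
-/

noncomputable section

/-- The underlying data of a crystal on a set `B`. -/
structure PreCrystal (I : Type*) (P : Type*) (B : Type*) where
  wt : B → P
  eps : I → B → WithBot ℤ
  phi : I → B → WithBot ℤ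
  e : I → B → Option B
  f : I → B → Option B

/-- The crystal axioms (i)–(v). -/
structure IsCrystal {I P B : Type*} [AddCommGroup P]
    (α : I → P) (co : I → P →+ ℤ) (c : PreCrystal I P B) : Prop where
  phi_eq : ∀ k b, c.phi k b = c.eps k b + (co k (c.wt b) : WithBot ℤ)
  wt_e : ∀ k b b', c.e k b = some b' → c.wt b' = c.wt b + α k
  eps_e : ∀ k b b', c.e k b = some b' → c.eps k b' + 1 = c.eps k b
  phi_e : ∀ k b b', c.e k b = some b' → c.phi k b' = c.phi k b + 1
  wt_f : ∀ k b b', c.f k b = some b' → c.wt b' = c.wt b - α k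
  eps_f : ∀ k b b', c.f k b = some b' → c.eps k b' = c.eps k b + 1
  phi_f : ∀ k b b', c.f k b = some b' → c.phi k b' + 1 = c.phi k b
  ef_iff : ∀ k b b', c.f k b = some b' ↔ c.e k b' = some b
  e_bot : ∀ k b, c.phi k b = ⊥ → c.e k b = none
  f_bot : ∀ k b, c.phi k b = ⊥ → c.f k b = none

/-- `n`-th iterate `ẽ_k^n` of the Kashiwara operator `ẽ_k` (with value in
`B ⊔ {0}`, where `0` is absorbing). -/
def PreCrystal.eIter {I P B : Type*} (c : PreCrystal I P B) (k : I) :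
    ℕ → B → Option B
  | 0, b => some b
  | n + 1, b => (c.e k b).bind (c.eIter k n)

/-- `n`-th iterate `f̃_k^n` of the Kashiwara operator `f̃_k`. -/
def PreCrystal.fIter {I P B : Type*} (c : PreCrystal I P B) (k : I) :
    ℕ → B → Option B
  | 0, b => some b
  | n + 1, b => (c.f k b).bind (c.fIter k n)

/-- A crystal is normal if `ε_k(b) = max {n ≥ 0 : ẽ_k^n b ≠ 0}` and
`φ_k(b) = max {n ≥ 0 : f̃_k^n b ≠ 0}`. -/
def PreCrystal.IsNormal {I P B : Type*} (c : PreCrystal I P B) : Prop :=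
  ∀ (k : I) (b : B),
    (∃ n : ℕ, c.eIter k n b ≠ none ∧ c.eIter k (n + 1) b = none ∧
      c.eps k b = ((n : ℤ) : WithBot ℤ)) ∧
    (∃ n : ℕ, c.fIter k n b ≠ none ∧ c.fIter k (n + 1) b = none ∧
      c.phi k b = ((n : ℤ) : WithBot ℤ))

/-- The tensor product data on `B₁ × B₂`:
`wt(b₁⊗b₂) = wt b₁ + wt b₂`, `ε_k(b₁⊗b₂) = max(ε_k(b₁), ε_k(b₂) − wt_k(b₁))`,
`φ_k(b₁⊗b₂) = max(φ_k(b₂), φ_k(b₁) + wt_k(b₂))`,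
`ẽ_k` acts on the first factor if `φ_k(b₁) ≥ ε_k(b₂)` and on the second one
otherwise, and `f̃_k` acts on the first factor if `φ_k(b₁) > ε_k(b₂)` and on
the second one otherwise (with `b₁ ⊗ 0 = 0 ⊗ b₂ = 0`, via `Option.map`). -/
def PreCrystal.tensor {I P B₁ B₂ : Type*} [AddCommGroup P] (co : I → P →+ ℤ)
    (c₁ : PreCrystal I P B₁) (c₂ : PreCrystal I P B₂) :
    PreCrystal I P (B₁ × B₂) where
  wt b := c₁.wt b.1 + c₂.wt b.2
  eps k b := max (c₁.eps k b.1) (c₂.eps k b.2 + ((-(co k (c₁.wt b.1)) : ℤ) : WithBot ℤ))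
  phi k b := max (c₂.phi k b.2) (c₁.phi k b.1 + ((co k (c₂.wt b.2) : ℤ) : WithBot ℤ))
  e k b :=
    if c₂.eps k b.2 ≤ c₁.phi k b.1 then (c₁.e k b.1).map fun x => (x, b.2)
    else (c₂.e k b.2).map fun x => (b.1, x)
  f k b :=
    if c₂.eps k b.2 < c₁.phi k b.1 then (c₁.f k b.1).map fun x => (x, b.2)
    else (c₂.f k b.2).map fun x => (b.1, x)

/-!
An element `b` of the normal crystal `d` with `ε_k(b) = N` is `f̃_k^N b₀` for the
element `b₀ = ẽ_k^N b`, which has `ε_k(b₀) = 0`. At such a `k`-highest weight element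
`b₀ = x ⊗ y` the hypotheses determine the whole `k`-string of `d` through `b₀`: it is
`f̃_k^r (x ⊗ y) = f̃_k^{min(r,t)} x ⊗ f̃_k^{r-t} y` with `t = φ_k(x) − ε_k(y) ≥ 0`, and a
direct computation shows that along this string `ε_k`, `ẽ_k` and `f̃_k` of the tensor
product structure are `r`, the step back and the step forward. So `ε_k`, `ẽ_k`, `f̃_k`
of `d` and of the tensor product agree at `b`; `φ_k` then agrees because both satisfy
`φ_k = ε_k + wt_k` and have the same weights.
-/

attribute [ext] PreCrystal

namespace PreCrystal

variable {I P B B₁ B₂ : Type*}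

section Iterates

variable {c : PreCrystal I P B} {k : I}

lemma fIter_succ' (n : ℕ) (b : B) : c.fIter k (n + 1) b = (c.fIter k n b).bind (c.f k) := by
  induction n generalizing b with
  | zero => cases h : c.f k b <;> simp [fIter, h]
  | succ n ih =>
    cases h : c.f k b with
    | none => simp [fIter, h]
    | some b' => simpa [fIter, h] using ih b'

lemma f_eq_fIter_succ {n : ℕ} {b₀ b : B} (h : c.fIter k n b₀ = some b) :
    c.f k b = c.fIter k (n + 1) b₀ := by
  rw [fIter_succ', h, Option.bind_some]

lemma e_eq_none_of_eps_eq_zero (hc : c.IsNormal) {b : B} (h : c.eps k b = 0) :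
    c.e k b = none := by
  obtain ⟨⟨n, -, hn, hε⟩, -⟩ := hc k b
  obtain rfl : n = 0 := by rw [h] at hε; exact_mod_cast hε.symm
  simpa [eIter] using hn

lemma exists_eps_eq_natCast (hc : c.IsNormal) (b : B) :
    ∃ n : ℕ, c.eps k b = ((n : ℤ) : WithBot ℤ) :=
  let ⟨n, _, _, hn⟩ := (hc k b).1
  ⟨n, hn⟩

/-- `f̃_k^r (x ⊗ y)` in the tensor product, when `ε_k(x) = 0` and `t = φ_k(x) − ε_k(y) ≥ 0`. -/
def tensorString (c₁ : PreCrystal I P B₁) (c₂ : PreCrystal I P B₂) (k : I) (t : ℕ)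
    (x : B₁) (y : B₂) (r : ℕ) : Option (B₁ × B₂) :=
  Option.map₂ Prod.mk (c₁.fIter k (min r t) x) (c₂.fIter k (r - t) y)

variable {c₁ : PreCrystal I P B₁} {c₂ : PreCrystal I P B₂} {t r : ℕ} {x : B₁} {y : B₂}

lemma tensorString_of_le (hr : r ≤ t) :
    tensorString c₁ c₂ k t x y r = (c₁.fIter k r x).map fun x' => (x', y) := by
  rw [tensorString, min_eq_left hr, Nat.sub_eq_zero_of_le hr, fIter, Option.map₂_coe_right]

lemma tensorString_of_ge (hr : t ≤ r) :
    tensorString c₁ c₂ k t x y r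
      = Option.map₂ Prod.mk (c₁.fIter k t x) (c₂.fIter k (r - t) y) := by
  rw [tensorString, min_eq_right hr]

end Iterates

section Crystal

variable [AddCommGroup P] {α : I → P} {co : I → P →+ ℤ} {c : PreCrystal I P B} {k : I}

lemma fIter_eq_some_of_eIter_eq_some (hc : IsCrystal α co c) {n : ℕ} {b b' : B}
    (h : c.eIter k n b = some b') : c.fIter k n b' = some b := by
  induction n generalizing b with
  | zero => simpa [eIter, fIter, eq_comm] using h
  | succ n ih =>
    obtain ⟨b₀, hb₀, h⟩ := Option.bind_eq_some_iff.mp h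
    rw [fIter_succ', ih h, Option.bind_some, hc.ef_iff]
    exact hb₀

lemma e_eq_fIter_of_fIter_succ (hc : IsCrystal α co c) {n : ℕ} {b₀ b : B}
    (h : c.fIter k (n + 1) b₀ = some b) : c.e k b = c.fIter k n b₀ := by
  rw [fIter_succ'] at h
  obtain ⟨b', hb', hf⟩ := Option.bind_eq_some_iff.mp h
  rw [hb', ← hc.ef_iff]
  exact hf

lemma eps_of_fIter_eq_some (hc : IsCrystal α co c) {n : ℕ} {b b' : B}
    (h : c.fIter k n b = some b') :
    c.eps k b' = c.eps k b + ((n : ℤ) : WithBot ℤ) := by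
  induction n generalizing b' with
  | zero => simp_all [fIter]
  | succ n ih =>
    rw [fIter_succ'] at h
    obtain ⟨b₀, hb₀, hf⟩ := Option.bind_eq_some_iff.mp h
    rw [hc.eps_f k b₀ b' hf, ih hb₀, add_assoc]
    norm_cast

lemma phi_add_of_fIter_eq_some (hc : IsCrystal α co c) {n : ℕ} {b b' : B}
    (h : c.fIter k n b = some b') :
    c.phi k b' + ((n : ℤ) : WithBot ℤ) = c.phi k b := by
  induction n generalizing b' with
  | zero => simp_all [fIter]
  | succ n ih =>
    rw [fIter_succ'] at h
    obtain ⟨b₀, hb₀, hf⟩ := Option.bind_eq_some_iff.mp h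
    rw [← ih hb₀, ← hc.phi_f k b₀ b' hf, add_assoc, add_comm (1 : WithBot ℤ)]
    norm_cast

lemma exists_eps_eq_zero_fIter_eq (hc : IsCrystal α co c) (hn : c.IsNormal) {N : ℕ} {b : B}
    (hN : c.eps k b = ((N : ℤ) : WithBot ℤ)) :
    ∃ b₀, c.eps k b₀ = 0 ∧ c.fIter k N b₀ = some b := by
  obtain ⟨⟨n, hne, -, hε⟩, -⟩ := hn k b
  obtain rfl : n = N := by rw [hN] at hε; exact_mod_cast hε.symm
  obtain ⟨b₀, hb₀⟩ := Option.ne_none_iff_exists'.mp hne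
  have hf := fIter_eq_some_of_eIter_eq_some hc hb₀
  refine ⟨b₀, ?_, hf⟩
  obtain ⟨m, hm⟩ := exists_eps_eq_natCast hn (k := k) b₀
  have hεn := eps_of_fIter_eq_some hc hf
  rw [hN, hm] at hεn
  have : (n : ℤ) = m + n := by exact_mod_cast hεn
  rw [hm, show m = 0 by omega]
  rfl

end Crystal

section Tensor

variable [AddCommGroup P] {α : I → P} {co : I → P →+ ℤ}
  {c₁ : PreCrystal I P B₁} {c₂ : PreCrystal I P B₂}

lemma tensor_phi_eq (h₁ : IsCrystal α co c₁) (h₂ : IsCrystal α co c₂) (k : I) (b : B₁ × B₂) :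
    (c₁.tensor co c₂).phi k b
      = (c₁.tensor co c₂).eps k b + ((co k ((c₁.tensor co c₂).wt b) : ℤ) : WithBot ℤ) := by
  simp only [tensor, map_add, h₁.phi_eq, h₂.phi_eq, ← max_add_add_right,
    max_comm (c₁.eps k b.1 + _)]
  congr 1
  · rw [add_assoc, ← WithBot.coe_add, neg_add_cancel_left]
  · rw [add_assoc, ← WithBot.coe_add]

lemma eps_eq_zero_and_exists_of_tensor_eps_eq_zero (n₁ : c₁.IsNormal) (n₂ : c₂.IsNormal)
    {k : I} {x : B₁} {y : B₂} (h : (c₁.tensor co c₂).eps k (x, y) = 0) :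
    c₁.eps k x = 0 ∧
      ∃ e t : ℕ, c₂.eps k y = ((e : ℤ) : WithBot ℤ) ∧ co k (c₁.wt x) = e + t := by
  obtain ⟨m, hm⟩ := exists_eps_eq_natCast n₁ (k := k) x
  obtain ⟨e, he⟩ := exists_eps_eq_natCast n₂ (k := k) y
  have hmax : max (m : ℤ) (e + -co k (c₁.wt x)) = 0 := by
    simp only [tensor, hm, he] at h
    exact_mod_cast h
  refine ⟨?_, e, (co k (c₁.wt x) - e).toNat, he, by omega⟩
  rw [hm, show (m : ℤ) = 0 by omega, WithBot.coe_zero]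

section TensorString

variable (h₁ : IsCrystal α co c₁) (h₂ : IsCrystal α co c₂) {k : I} {x : B₁} {y : B₂} {e t r : ℕ}
  (hx : c₁.eps k x = 0) (hy : c₂.eps k y = ((e : ℤ) : WithBot ℤ)) (hw : co k (c₁.wt x) = e + t)
include h₁ h₂ hx hy hw

lemma eps_phi_of_tensorString_eq_some {b : B₁ × B₂}
    (h : tensorString c₁ c₂ k t x y r = some b) :
    c₁.eps k b.1 = (((min r t : ℕ) : ℤ) : WithBot ℤ) ∧
    c₁.phi k b.1 = (((e + t - min r t : ℕ) : ℤ) : WithBot ℤ) ∧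
    c₂.eps k b.2 = (((e + (r - t) : ℕ) : ℤ) : WithBot ℤ) := by
  obtain ⟨b₁, b₂, hb₁, hb₂, rfl⟩ := Option.map₂_eq_some_iff.mp h
  have hφ := phi_add_of_fIter_eq_some h₁ hb₁
  rw [h₁.phi_eq k x, hx, hw, zero_add, WithBot.add_eq_coe] at hφ
  obtain ⟨φ, m, hφb, hm, hsum⟩ := hφ
  refine ⟨?_, ?_, ?_⟩
  · rw [eps_of_fIter_eq_some h₁ hb₁, hx, zero_add]
  · have : m = min r t := by exact_mod_cast hm
    rw [← hφb, WithBot.coe_inj]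
    omega
  · rw [eps_of_fIter_eq_some h₂ hb₂, hy]
    norm_cast

lemma tensor_eps_of_tensorString_eq_some {b : B₁ × B₂}
    (h : tensorString c₁ c₂ k t x y r = some b) :
    (c₁.tensor co c₂).eps k b = ((r : ℤ) : WithBot ℤ) := by
  obtain ⟨hε₁, hφ₁, hε₂⟩ := eps_phi_of_tensorString_eq_some h₁ h₂ hx hy hw h
  have hw₁ : ((e + t - min r t : ℕ) : ℤ) = (min r t : ℕ) + co k (c₁.wt b.1) := by
    have := h₁.phi_eq k b.1
    rw [hφ₁, hε₁] at this
    exact_mod_cast this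
  simp only [tensor, hε₁, hε₂]
  norm_cast
  omega

lemma tensor_f_of_tensorString_eq_some {b : B₁ × B₂}
    (h : tensorString c₁ c₂ k t x y r = some b) :
    (c₁.tensor co c₂).f k b = tensorString c₁ c₂ k t x y (r + 1) := by
  obtain ⟨-, hφ₁, hε₂⟩ := eps_phi_of_tensorString_eq_some h₁ h₂ hx hy hw h
  simp only [tensor, hφ₁, hε₂, WithBot.coe_lt_coe, Nat.cast_lt]
  rcases lt_or_ge r t with hrt | hrt
  · rw [if_pos (by omega), tensorString_of_le hrt]
    rw [tensorString_of_le hrt.le, Option.map_eq_some_iff] at h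
    obtain ⟨b₁, hb₁, rfl⟩ := h
    rw [f_eq_fIter_succ hb₁]
  · rw [if_neg (by omega), tensorString_of_ge (by omega), Nat.sub_add_comm hrt]
    rw [tensorString_of_ge hrt, Option.map₂_eq_some_iff] at h
    obtain ⟨b₁, b₂, hb₁, hb₂, rfl⟩ := h
    rw [← f_eq_fIter_succ hb₂, Option.mem_def.mp hb₁, Option.map₂_coe_left]

lemma tensor_e_of_tensorString_succ_eq_some {b : B₁ × B₂}
    (h : tensorString c₁ c₂ k t x y (r + 1) = some b) :
    (c₁.tensor co c₂).e k b = tensorString c₁ c₂ k t x y r := by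
  obtain ⟨-, hφ₁, hε₂⟩ := eps_phi_of_tensorString_eq_some h₁ h₂ hx hy hw h
  simp only [tensor, hφ₁, hε₂, WithBot.coe_le_coe, Nat.cast_le]
  rcases lt_or_ge r t with hrt | hrt
  · rw [if_pos (by omega), tensorString_of_le hrt.le]
    rw [tensorString_of_le hrt, Option.map_eq_some_iff] at h
    obtain ⟨b₁, hb₁, rfl⟩ := h
    rw [e_eq_fIter_of_fIter_succ h₁ hb₁]
  · rw [if_neg (by omega), tensorString_of_ge hrt]
    rw [tensorString_of_ge (by omega), Nat.sub_add_comm hrt, Option.map₂_eq_some_iff] at h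
    obtain ⟨b₁, b₂, hb₁, hb₂, rfl⟩ := h
    rw [e_eq_fIter_of_fIter_succ h₂ hb₂, Option.mem_def.mp hb₁, Option.map₂_coe_left]

lemma tensor_e_of_tensorString_zero_eq_some (n₁ : c₁.IsNormal) {b : B₁ × B₂}
    (h : tensorString c₁ c₂ k t x y 0 = some b) : (c₁.tensor co c₂).e k b = none := by
  obtain ⟨hε₁, hφ₁, hε₂⟩ := eps_phi_of_tensorString_eq_some h₁ h₂ hx hy hw h
  simp only [tensor, hφ₁, hε₂, WithBot.coe_le_coe, Nat.cast_le]
  rw [if_pos (by omega), e_eq_none_of_eps_eq_zero n₁ (by simpa using hε₁), Option.map_none]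

end TensorString

section Uniqueness

variable {d : PreCrystal I P (B₁ × B₂)}
  (hf₁ : ∀ (k : I) (b : B₁ × B₂), d.eps k b = 0 → ∀ r : ℕ,
    ((r : ℤ) : WithBot ℤ) + c₂.eps k b.2 ≤ ((co k (c₁.wt b.1) : ℤ) : WithBot ℤ) →
    d.fIter k r b = (c₁.fIter k r b.1).map (fun x => (x, b.2)))
  (hf₂ : ∀ (k : I) (b : B₁ × B₂), d.eps k b = 0 → ∀ r s : ℕ,
    ¬(((r : ℤ) : WithBot ℤ) + c₂.eps k b.2 ≤ ((co k (c₁.wt b.1) : ℤ) : WithBot ℤ)) →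
    ((s : ℤ) : WithBot ℤ) + c₂.eps k b.2 = ((co k (c₁.wt b.1) : ℤ) : WithBot ℤ) →
    d.fIter k r b = Option.map₂ Prod.mk (c₁.fIter k s b.1) (c₂.fIter k (r - s) b.2))
include hf₁ hf₂

lemma fIter_eq_tensorString {k : I} {b₀ : B₁ × B₂} (h₀ : d.eps k b₀ = 0) {e t : ℕ}
    (hy : c₂.eps k b₀.2 = ((e : ℤ) : WithBot ℤ)) (hw : co k (c₁.wt b₀.1) = e + t) (r : ℕ) :
    d.fIter k r b₀ = tensorString c₁ c₂ k t b₀.1 b₀.2 r := by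
  rcases le_or_gt r t with hrt | hrt
  · rw [hf₁ k b₀ h₀ r (by rw [hy, hw]; exact_mod_cast (by omega : (r : ℤ) + e ≤ e + t)),
      tensorString_of_le hrt]
  · rw [hf₂ k b₀ h₀ r t (by rw [hy, hw]; exact_mod_cast (by omega : ¬(r : ℤ) + e ≤ e + t))
      (by rw [hy, hw]; exact_mod_cast (by omega : (t : ℤ) + e = e + t)),
      tensorString_of_ge hrt.le]

lemma eps_e_f_eq_tensor (h₁ : IsCrystal α co c₁) (h₂ : IsCrystal α co c₂)
    (n₁ : c₁.IsNormal) (n₂ : c₂.IsNormal) (hd : IsCrystal α co d) (nd : d.IsNormal)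
    (heps : ∀ (k : I) (b : B₁ × B₂), d.eps k b = 0 → d.eps k b = (c₁.tensor co c₂).eps k b)
    (k : I) (b : B₁ × B₂) :
    d.eps k b = (c₁.tensor co c₂).eps k b ∧ d.e k b = (c₁.tensor co c₂).e k b ∧
      d.f k b = (c₁.tensor co c₂).f k b := by
  obtain ⟨N, hN⟩ := exists_eps_eq_natCast nd (k := k) b
  obtain ⟨b₀, h₀, hb⟩ := exists_eps_eq_zero_fIter_eq hd nd hN
  obtain ⟨hx, e, t, hy, hw⟩ :=
    eps_eq_zero_and_exists_of_tensor_eps_eq_zero n₁ n₂ (heps k b₀ h₀ ▸ h₀)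
  have hstring := fIter_eq_tensorString hf₁ hf₂ h₀ hy hw
  have hbN : tensorString c₁ c₂ k t b₀.1 b₀.2 N = some b := hstring N ▸ hb
  refine ⟨?_, ?_, ?_⟩
  · rw [hN, tensor_eps_of_tensorString_eq_some h₁ h₂ hx hy hw hbN]
  · cases N with
    | zero =>
      rw [e_eq_none_of_eps_eq_zero nd hN,
        tensor_e_of_tensorString_zero_eq_some h₁ h₂ hx hy hw n₁ hbN]
    | succ m =>
      rw [e_eq_fIter_of_fIter_succ hd hb, hstring,
        tensor_e_of_tensorString_succ_eq_some h₁ h₂ hx hy hw hbN]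
  · rw [f_eq_fIter_succ hb, hstring, tensor_f_of_tensorString_eq_some h₁ h₂ hx hy hw hbN]

end Uniqueness

end Tensor

end PreCrystal

theorem tensor_structure_unique_general {I P B₁ B₂ : Type*} [AddCommGroup P]
    (α : I → P) (co : I → P →+ ℤ)
    (c₁ : PreCrystal I P B₁) (c₂ : PreCrystal I P B₂)
    (h₁ : IsCrystal α co c₁) (h₂ : IsCrystal α co c₂)
    (n₁ : c₁.IsNormal) (n₂ : c₂.IsNormal)
    (d : PreCrystal I P (B₁ × B₂))
    (hd : IsCrystal α co d) (nd : d.IsNormal)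
    (hwt : ∀ b : B₁ × B₂, d.wt b = c₁.wt b.1 + c₂.wt b.2)
    (heps : ∀ (k : I) (b : B₁ × B₂), d.eps k b = 0 →
      d.eps k b
        = max (c₁.eps k b.1)
            (c₂.eps k b.2 + ((-(co k (c₁.wt b.1)) : ℤ) : WithBot ℤ)))
    (hf₁ : ∀ (k : I) (b : B₁ × B₂), d.eps k b = 0 → ∀ r : ℕ,
      ((r : ℤ) : WithBot ℤ) + c₂.eps k b.2 ≤ ((co k (c₁.wt b.1) : ℤ) : WithBot ℤ) →
      d.fIter k r b = (c₁.fIter k r b.1).map (fun x => (x, b.2)))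
    (hf₂ : ∀ (k : I) (b : B₁ × B₂), d.eps k b = 0 → ∀ r s : ℕ,
      ¬(((r : ℤ) : WithBot ℤ) + c₂.eps k b.2
          ≤ ((co k (c₁.wt b.1) : ℤ) : WithBot ℤ)) →
      ((s : ℤ) : WithBot ℤ) + c₂.eps k b.2 = ((co k (c₁.wt b.1) : ℤ) : WithBot ℤ) →
      d.fIter k r b
        = Option.map₂ Prod.mk (c₁.fIter k s b.1) (c₂.fIter k (r - s) b.2)) :
    d = c₁.tensor co c₂ := by
  have hagree := PreCrystal.eps_e_f_eq_tensor hf₁ hf₂ h₁ h₂ n₁ n₂ hd nd heps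
  ext1
  · exact funext hwt
  · exact funext₂ fun k b => (hagree k b).1
  · funext k b
    rw [hd.phi_eq, PreCrystal.tensor_phi_eq h₁ h₂, (hagree k b).1, hwt]
    rfl
  · exact funext₂ fun k b => (hagree k b).2.1
  · exact funext₂ fun k b => (hagree k b).2.2

/-- let `B₁`, `B₂` be normal crystals, and suppose `B₁ × B₂`
carries a normal crystal structure `d` such that
(a) `wt(b₁ ⊗ b₂) = wt(b₁) + wt(b₂)`, and
(b) whenever `ε_k(b₁ ⊗ b₂) = 0`:
  `ε_k(b₁ ⊗ b₂) = max(ε_k(b₁), ε_k(b₂) − wt_k(b₁))`,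
  `ẽ_k(b₁ ⊗ b₂) = (ẽ_k b₁) ⊗ b₂` if `φ_k(b₁) ≥ ε_k(b₂)` and `b₁ ⊗ (ẽ_k b₂)`
  otherwise, and for every `r ≥ 0`:
  `f̃_k^r(b₁ ⊗ b₂) = (f̃_k^r b₁) ⊗ b₂` if `r ≤ wt_k(b₁) − ε_k(b₂)`, and
  `f̃_k^r(b₁ ⊗ b₂) = (f̃_k^{wt_k(b₁)−ε_k(b₂)} b₁) ⊗ (f̃_k^{r−wt_k(b₁)+ε_k(b₂)} b₂)`
  otherwise.
Then `d` coincides with the tensor product crystal structure on `B₁ ⊗ B₂`. -/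
theorem tensor_structure_unique {I P B₁ B₂ : Type*} [AddCommGroup P]
    (α : I → P) (co : I → P →+ ℤ)
    (c₁ : PreCrystal I P B₁) (c₂ : PreCrystal I P B₂)
    (h₁ : IsCrystal α co c₁) (h₂ : IsCrystal α co c₂)
    (n₁ : c₁.IsNormal) (n₂ : c₂.IsNormal)
    (d : PreCrystal I P (B₁ × B₂))
    (hd : IsCrystal α co d) (nd : d.IsNormal)
    (hwt : ∀ b : B₁ × B₂, d.wt b = c₁.wt b.1 + c₂.wt b.2)
    (heps : ∀ (k : I) (b : B₁ × B₂), d.eps k b = 0 →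
      d.eps k b
        = max (c₁.eps k b.1)
            (c₂.eps k b.2 + ((-(co k (c₁.wt b.1)) : ℤ) : WithBot ℤ)))
    (he : ∀ (k : I) (b : B₁ × B₂), d.eps k b = 0 →
      d.e k b
        = if c₂.eps k b.2 ≤ c₁.phi k b.1 then (c₁.e k b.1).map (fun x => (x, b.2))
          else (c₂.e k b.2).map (fun x => (b.1, x)))
    (hf₁ : ∀ (k : I) (b : B₁ × B₂), d.eps k b = 0 → ∀ r : ℕ,
      ((r : ℤ) : WithBot ℤ) + c₂.eps k b.2 ≤ ((co k (c₁.wt b.1) : ℤ) : WithBot ℤ) →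
      d.fIter k r b = (c₁.fIter k r b.1).map (fun x => (x, b.2)))
    (hf₂ : ∀ (k : I) (b : B₁ × B₂), d.eps k b = 0 → ∀ r s : ℕ,
      ¬(((r : ℤ) : WithBot ℤ) + c₂.eps k b.2
          ≤ ((co k (c₁.wt b.1) : ℤ) : WithBot ℤ)) →
      ((s : ℤ) : WithBot ℤ) + c₂.eps k b.2 = ((co k (c₁.wt b.1) : ℤ) : WithBot ℤ) →
      d.fIter k r b
        = Option.map₂ Prod.mk (c₁.fIter k s b.1) (c₂.fIter k (r - s) b.2)) :
    d = c₁.tensor co c₂ :=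
  tensor_structure_unique_general α co c₁ c₂ h₁ h₂ n₁ n₂ d hd nd hwt heps hf₁ hf₂
end
end

section
/- Let (B¹, i¹, j¹) and (B², i², j²) be stable framed representations on (V¹, W¹) and (V², W²) respectively, with μ(B¹, i¹, j¹) = 0 and μ(B², i², j²) = 0. Then β²¹ ∘ α²¹ = 0, α²¹ is injective, β²¹ is surjective, and the quotient Ker β²¹ / Im α²¹ has dimension ∑_{k∈I} (dim V¹_k · dim W²_k + dim W¹_k · dim V²_k) − ∑_{k,l∈I} c_{kl} · dim V¹_k · dim V²_l, where c_{kk} = 2 and, for k ≠ l, c_{kl} = −(number of edges joining k and l). -/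
/-!
Framed representations of a quiver attached to a finite graph without edge
loops, with vertex set `I` and edge set `Ω`, where the edge `e ∈ Ω` joins the
vertices `s e` and `t e`.  The set `H` of oriented edges is `Ω ⊕ Ω`: each
edge occurs with both orientations.  For an `I`-graded complex vector space
`V`, a datum `B ∈ E(V,V)` is encoded by its components `Bp e : V (s e) → V (t e)`
(along `e` oriented from `s e` to `t e`) and `Bm e : V (t e) → V (s e)` (along
the reversed orientation); a datum in `L(V,W)` is a family of maps
`V k → W k`.
-/

noncomputable section

variable {I : Type*} {Ω : Type*}

/-- A framed representation `(B, i, j) ∈ E(V,V) ⊕ L(W,V) ⊕ L(V,W)` on the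
pair `(V, W)` of `I`-graded vector spaces. -/
structure FramedRep (s t : Ω → I) (V W : I → Type*)
    [∀ k, AddCommGroup (V k)] [∀ k, Module ℂ (V k)]
    [∀ k, AddCommGroup (W k)] [∀ k, Module ℂ (W k)] where
  Bp : ∀ e, V (s e) →ₗ[ℂ] V (t e)
  Bm : ∀ e, V (t e) →ₗ[ℂ] V (s e)
  i : ∀ k, W k →ₗ[ℂ] V k
  j : ∀ k, V k →ₗ[ℂ] W k

/-- Stability: the only `B`-invariant `I`-graded subspace `S ⊆ V` contained
in `Ker j` is `S = 0`. -/
def FramedRep.IsStable {s t : Ω → I} {V W : I → Type*}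
    [∀ k, AddCommGroup (V k)] [∀ k, Module ℂ (V k)]
    [∀ k, AddCommGroup (W k)] [∀ k, Module ℂ (W k)]
    (R : FramedRep s t V W) : Prop :=
  ∀ S : ∀ k, Submodule ℂ (V k),
    (∀ e, ∀ x ∈ S (s e), R.Bp e x ∈ S (t e)) →
    (∀ e, ∀ x ∈ S (t e), R.Bm e x ∈ S (s e)) →
    (∀ k, ∀ x ∈ S k, R.j k x = 0) →
    ∀ k, S k = ⊥

/-- Transport of graded components along an equality of vertices. -/
def lcast (V : I → Type*) [∀ k, AddCommGroup (V k)] [∀ k, Module ℂ (V k)]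
    {a b : I} (h : a = b) : V a →ₗ[ℂ] V b := by
  subst h; exact LinearMap.id

section

variable {s t : Ω → I}
variable {V₁ W₁ V₂ W₂ : I → Type*}
  [∀ k, AddCommGroup (V₁ k)] [∀ k, Module ℂ (V₁ k)]
  [∀ k, AddCommGroup (W₁ k)] [∀ k, Module ℂ (W₁ k)]
  [∀ k, AddCommGroup (V₂ k)] [∀ k, Module ℂ (V₂ k)]
  [∀ k, AddCommGroup (W₂ k)] [∀ k, Module ℂ (W₂ k)]

/-- The vanishing of the moment map, `μ(B,i,j) = εBB + ij = 0`: for every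
vertex `k`, `∑_{h : in(h) = k} ε(h) B_h B_h̄ + i_k j_k = 0`, where the sum over
oriented edges `h` into `k` splits into the edges `e` with `t e = k` (with
sign `eps e`) and those with `s e = k` (with sign `−eps e`). -/
def FramedRep.MuZero [Fintype Ω] [DecidableEq I] (eps : Ω → ℂ)
    {V W : I → Type*}
    [∀ k, AddCommGroup (V k)] [∀ k, Module ℂ (V k)]
    [∀ k, AddCommGroup (W k)] [∀ k, Module ℂ (W k)]
    (R : FramedRep s t V W) : Prop :=
  ∀ k : I,
    (∑ e : {e : Ω // t e = k},
        eps e.1 • (lcast V e.2 ∘ₗ R.Bp e.1 ∘ₗ R.Bm e.1 ∘ₗ lcast V e.2.symm))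
    + (∑ e : {e : Ω // s e = k},
        (-eps e.1) • (lcast V e.2 ∘ₗ R.Bm e.1 ∘ₗ R.Bp e.1 ∘ₗ lcast V e.2.symm))
    + R.i k ∘ₗ R.j k = 0

/-- The space `E(V¹,V²) ⊕ L(W¹,V²) ⊕ L(V¹,W²)`, middle term of the complex
`L(V¹,V²) → E(V¹,V²) ⊕ L(W¹,V²) ⊕ L(V¹,W²) → L(V¹,V²)`. -/
abbrev ELL (s t : Ω → I) (V₁ W₁ V₂ W₂ : I → Type*)
    [∀ k, AddCommGroup (V₁ k)] [∀ k, Module ℂ (V₁ k)]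
    [∀ k, AddCommGroup (W₁ k)] [∀ k, Module ℂ (W₁ k)]
    [∀ k, AddCommGroup (V₂ k)] [∀ k, Module ℂ (V₂ k)]
    [∀ k, AddCommGroup (W₂ k)] [∀ k, Module ℂ (W₂ k)] : Type _ :=
  (∀ e, V₁ (s e) →ₗ[ℂ] V₂ (t e)) × (∀ e, V₁ (t e) →ₗ[ℂ] V₂ (s e)) ×
  (∀ k, W₁ k →ₗ[ℂ] V₂ k) × (∀ k, V₁ k →ₗ[ℂ] W₂ k)

/-- The map `α²¹ : L(V¹,V²) → E(V¹,V²) ⊕ L(W¹,V²) ⊕ L(V¹,W²)`,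
`α²¹(ξ) = (B²ξ − ξB¹, −ξi¹, j²ξ)`. -/
def alphaMap (R₁ : FramedRep s t V₁ W₁) (R₂ : FramedRep s t V₂ W₂)
    (ξ : ∀ k, V₁ k →ₗ[ℂ] V₂ k) : ELL s t V₁ W₁ V₂ W₂ :=
  ⟨fun e => R₂.Bp e ∘ₗ ξ (s e) - ξ (t e) ∘ₗ R₁.Bp e,
   fun e => R₂.Bm e ∘ₗ ξ (t e) - ξ (s e) ∘ₗ R₁.Bm e,
   fun k => -(ξ k ∘ₗ R₁.i k),
   fun k => R₂.j k ∘ₗ ξ k⟩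

/-- The `k`-th component of the map
`β²¹ : E(V¹,V²) ⊕ L(W¹,V²) ⊕ L(V¹,W²) → L(V¹,V²)`,
`β²¹(C,I,J)_k = ∑_{h : in(h)=k} ε(h)(B²_h C_h̄ + C_h B¹_h̄) + i²_k J_k + I_k j¹_k`,
where the sum over oriented edges `h` into `k` splits into the edges `e` with
`t e = k` (with sign `eps e`) and those with `s e = k` (with sign `−eps e`). -/
def betaMap [Fintype Ω] [DecidableEq I] (eps : Ω → ℂ)
    (R₁ : FramedRep s t V₁ W₁) (R₂ : FramedRep s t V₂ W₂)
    (x : ELL s t V₁ W₁ V₂ W₂) (k : I) : V₁ k →ₗ[ℂ] V₂ k :=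
  (∑ e : {e : Ω // t e = k},
      eps e.1 • (lcast V₂ e.2 ∘ₗ (R₂.Bp e.1 ∘ₗ x.2.1 e.1 + x.1 e.1 ∘ₗ R₁.Bm e.1)
        ∘ₗ lcast V₁ e.2.symm))
  + (∑ e : {e : Ω // s e = k},
      (-eps e.1) • (lcast V₂ e.2 ∘ₗ (R₂.Bm e.1 ∘ₗ x.1 e.1 + x.2.1 e.1 ∘ₗ R₁.Bp e.1)
        ∘ₗ lcast V₁ e.2.symm))
  + R₂.i k ∘ₗ x.2.2.2 k + x.2.2.1 k ∘ₗ R₁.j k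

end

/-!
`β²¹ ∘ α²¹` sends `ξ` to `μ² ξ − ξ μ¹`, which vanishes when both moment maps do.  If
`α²¹ ξ = 0`, then `ξ` intertwines `B¹` with `B²` and `j² ξ = 0`, so the image of `ξ` is a
`B²`-invariant graded subspace of `Ker j²`, hence zero by stability.  Under the trace
pairings, `β²¹` is the transpose of `α¹²`, which is injective by the same argument applied
to the stable `(B¹, i¹, j¹)`; so `β²¹` is surjective.  The dimension of the middle
cohomology is then `dim E ⊕ L ⊕ L − 2 dim L(V¹,V²)`, which is the stated Cartan-matrix
expression.
-/

open LinearMap Module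

section TracePairing

variable {K : Type*} [Field K]

theorem LinearMap.eq_zero_of_forall_trace_comp_eq_zero {M N : Type*}
    [AddCommGroup M] [Module K M] [FiniteDimensional K M] [AddCommGroup N] [Module K N]
    (f : N →ₗ[K] M) (h : ∀ g : M →ₗ[K] N, trace K M (f ∘ₗ g) = 0) : f = 0 := by
  ext y
  by_contra hy
  obtain ⟨φ, hφ⟩ := Projective.exists_dual_ne_zero K hy
  refine hφ ?_
  have hcomp : f ∘ₗ φ.smulRight y = φ.smulRight (f y) := by ext; simp
  simpa [hcomp] using h (φ.smulRight y)

theorem pi_eq_zero_of_forall_sum_trace_comp_eq_zero {ι : Type*} [Fintype ι] [DecidableEq ι]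
    {M N : ι → Type*} [∀ i, AddCommGroup (M i)] [∀ i, Module K (M i)]
    [∀ i, FiniteDimensional K (M i)] [∀ i, AddCommGroup (N i)] [∀ i, Module K (N i)]
    (f : ∀ i, N i →ₗ[K] M i)
    (h : ∀ g : ∀ i, M i →ₗ[K] N i, ∑ i, trace K (M i) (f i ∘ₗ g i) = 0) : f = 0 := by
  funext i
  refine eq_zero_of_forall_trace_comp_eq_zero (f i) fun g => ?_
  have hsingle := h (Pi.single i g)
  rwa [Fintype.sum_eq_single i fun j hj => by simp [Pi.single_eq_of_ne hj],
    Pi.single_eq_same] at hsingle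

theorem LinearMap.surjective_of_forall_pairing_comp_eq_zero {L' L X : Type*}
    [AddCommGroup L'] [Module K L'] [FiniteDimensional K L']
    [AddCommGroup L] [Module K L] [FiniteDimensional K L] [AddCommGroup X] [Module K X]
    (P : L' →ₗ[K] L →ₗ[K] K) (hP : ∀ η, P η = 0 → η = 0)
    (hdim : finrank K L' = finrank K L) (g : X →ₗ[K] L)
    (hg : ∀ η, (∀ x, P η (g x) = 0) → η = 0) : Function.Surjective g := by
  have hPsurj : Function.Surjective P := by
    rw [← injective_iff_surjective_of_finrank_eq_finrank (by rw [hdim, Subspace.dual_finrank_eq])]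
    exact (injective_iff_map_eq_zero P).mpr hP
  rw [← range_eq_top, ← Submodule.dualAnnihilator_eq_bot_iff, Submodule.eq_bot_iff]
  intro φ hφ
  obtain ⟨η, rfl⟩ := hPsurj φ
  rw [hg η fun x => (Submodule.mem_dualAnnihilator _).mp hφ _ (mem_range_self g x), map_zero]

theorem LinearMap.comp_finsetSum {ι M N P : Type*} [AddCommGroup M] [Module K M]
    [AddCommGroup N] [Module K N] [AddCommGroup P] [Module K P]
    (g : N →ₗ[K] P) (S : Finset ι) (f : ι → M →ₗ[K] N) :
    g ∘ₗ ∑ i ∈ S, f i = ∑ i ∈ S, g ∘ₗ f i :=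
  map_sum (llcomp K M N P g) f S

theorem finrank_quotient_comap_range_add_finrank {M N P : Type*}
    [AddCommGroup M] [Module K M] [FiniteDimensional K M]
    [AddCommGroup N] [Module K N] [FiniteDimensional K N] [AddCommGroup P] [Module K P]
    (f : M →ₗ[K] N) (g : N →ₗ[K] P) (hgf : g ∘ₗ f = 0)
    (hf : Function.Injective f) (hg : Function.Surjective g) :
    finrank K (ker g ⧸ (range f).comap (ker g).subtype) + finrank K M + finrank K P
      = finrank K N := by
  have hle : range f ≤ ker g := range_le_ker_iff.mpr hgf
  have hsub : finrank K ((range f).comap (ker g).subtype) = finrank K M := by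
    rw [(Submodule.comapSubtypeEquivOfLe hle).finrank_eq, finrank_range_of_inj hf]
  have hrank := finrank_range_add_finrank_ker g
  rw [range_eq_top.mpr hg, finrank_top] at hrank
  have hquot := Submodule.finrank_quotient_add_finrank ((range f).comap (ker g).subtype)
  omega

variable {ι : Type*} [Fintype ι]

theorem finrank_pi_linearMap {M N : ι → Type*} [∀ i, AddCommGroup (M i)] [∀ i, Module K (M i)]
    [∀ i, FiniteDimensional K (M i)] [∀ i, AddCommGroup (N i)] [∀ i, Module K (N i)]
    [∀ i, FiniteDimensional K (N i)] :
    finrank K (∀ i, M i →ₗ[K] N i) = ∑ i, finrank K (M i) * finrank K (N i) := by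
  simp [finrank_pi_fintype, finrank_linearMap]

def homTracePairing (M N : ι → Type*) [∀ i, AddCommGroup (M i)] [∀ i, Module K (M i)]
    [∀ i, AddCommGroup (N i)] [∀ i, Module K (N i)] :
    (∀ i, N i →ₗ[K] M i) →ₗ[K] (∀ i, M i →ₗ[K] N i) →ₗ[K] K :=
  mk₂ K (fun η ξ => ∑ i, trace K (M i) (η i ∘ₗ ξ i))
    (by simp [add_comp, Finset.sum_add_distrib]) (by simp [smul_comp, Finset.mul_sum])
    (by simp [comp_add, Finset.sum_add_distrib]) (by simp [comp_smul, Finset.mul_sum])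

end TracePairing

@[simp]
theorem lcast_rfl (V : I → Type*) [∀ k, AddCommGroup (V k)] [∀ k, Module ℂ (V k)]
    {a : I} : lcast V (rfl : a = a) = LinearMap.id := rfl

theorem Fintype.sum_fiberwise_dep {ι κ M : Type*} [Fintype ι] [Fintype κ] [DecidableEq κ]
    [AddCommMonoid M] (u : ι → κ) (f : ∀ k, {i // u i = k} → M) :
    ∑ k, ∑ i : {i // u i = k}, f k i = ∑ i, f (u i) ⟨i, rfl⟩ := by
  rw [← Fintype.sum_fiberwise u (fun i => f (u i) ⟨i, rfl⟩)]
  refine Finset.sum_congr rfl fun k _ => Finset.sum_congr rfl ?_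
  rintro ⟨i, rfl⟩ _
  rfl

namespace FramedRep

variable {s t : Ω → I}

section

variable {V W : I → Type*} [∀ k, AddCommGroup (V k)] [∀ k, Module ℂ (V k)]
  [∀ k, AddCommGroup (W k)] [∀ k, Module ℂ (W k)]

def moment [Fintype Ω] [DecidableEq I] (eps : Ω → ℂ) (R : FramedRep s t V W) (k : I) :
    V k →ₗ[ℂ] V k :=
  (∑ e : {e : Ω // t e = k},
      eps e.1 • (lcast V e.2 ∘ₗ R.Bp e.1 ∘ₗ R.Bm e.1 ∘ₗ lcast V e.2.symm))
  + (∑ e : {e : Ω // s e = k},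
      (-eps e.1) • (lcast V e.2 ∘ₗ R.Bm e.1 ∘ₗ R.Bp e.1 ∘ₗ lcast V e.2.symm))
  + R.i k ∘ₗ R.j k

theorem IsStable.eq_zero_of_intertwines {R : FramedRep s t V W} (hR : R.IsStable)
    {U : I → Type*} [∀ k, AddCommGroup (U k)] [∀ k, Module ℂ (U k)]
    (Pp : ∀ e, U (s e) →ₗ[ℂ] U (t e)) (Pm : ∀ e, U (t e) →ₗ[ℂ] U (s e))
    (f : ∀ k, U k →ₗ[ℂ] V k)
    (hp : ∀ e, R.Bp e ∘ₗ f (s e) = f (t e) ∘ₗ Pp e)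
    (hm : ∀ e, R.Bm e ∘ₗ f (t e) = f (s e) ∘ₗ Pm e)
    (hj : ∀ k, R.j k ∘ₗ f k = 0) : f = 0 := by
  have hrange : ∀ k, range (f k) = ⊥ := by
    refine hR (fun k => range (f k)) ?_ ?_ ?_
    · rintro e _ ⟨y, rfl⟩
      exact ⟨Pp e y, (LinearMap.congr_fun (hp e) y).symm⟩
    · rintro e _ ⟨y, rfl⟩
      exact ⟨Pm e y, (LinearMap.congr_fun (hm e) y).symm⟩
    · rintro k _ ⟨y, rfl⟩
      exact LinearMap.congr_fun (hj k) y
  exact funext fun k => range_eq_bot.mp (hrange k)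

end

end FramedRep

section

variable {s t : Ω → I}
variable {V₁ W₁ V₂ W₂ : I → Type*}
  [∀ k, AddCommGroup (V₁ k)] [∀ k, Module ℂ (V₁ k)]
  [∀ k, AddCommGroup (W₁ k)] [∀ k, Module ℂ (W₁ k)]
  [∀ k, AddCommGroup (V₂ k)] [∀ k, Module ℂ (V₂ k)]
  [∀ k, AddCommGroup (W₂ k)] [∀ k, Module ℂ (W₂ k)]
variable (R₁ : FramedRep s t V₁ W₁) (R₂ : FramedRep s t V₂ W₂)

theorem eq_zero_of_alphaMap_eq_zero (h₂ : R₂.IsStable) {ξ : ∀ k, V₁ k →ₗ[ℂ] V₂ k}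
    (hξ : alphaMap R₁ R₂ ξ = 0) : ξ = 0 := by
  simp only [alphaMap, Prod.mk_eq_zero, funext_iff, Pi.zero_apply, sub_eq_zero] at hξ
  exact h₂.eq_zero_of_intertwines R₁.Bp R₁.Bm ξ hξ.1 hξ.2.1 hξ.2.2.2

theorem betaMap_alphaMap [Fintype Ω] [DecidableEq I] (eps : Ω → ℂ)
    (ξ : ∀ k, V₁ k →ₗ[ℂ] V₂ k) (k : I) :
    betaMap eps R₁ R₂ (alphaMap R₁ R₂ ξ) k
      = R₂.moment eps k ∘ₗ ξ k - ξ k ∘ₗ R₁.moment eps k := by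
  have natural : ∀ {a b : I} (h : a = b) (v : V₁ a), ξ b (lcast V₁ h v) = lcast V₂ h (ξ a v) := by
    rintro a b rfl v
    rfl
  ext v
  simp [betaMap, alphaMap, FramedRep.moment, natural, smul_sub, Finset.sum_sub_distrib, map_sum]
  abel

def alphaLinearMap : (∀ k, V₁ k →ₗ[ℂ] V₂ k) →ₗ[ℂ] ELL s t V₁ W₁ V₂ W₂ where
  toFun := alphaMap R₁ R₂
  map_add' ξ ζ := by
    simp only [alphaMap, Prod.mk_add_mk, Prod.mk.injEq]
    refine ⟨?_, ?_, ?_, ?_⟩ <;> funext e <;> ext v <;> simp <;> abel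
  map_smul' c ξ := by
    simp only [alphaMap, Prod.smul_mk, Prod.mk.injEq, RingHom.id_apply]
    refine ⟨?_, ?_, ?_, ?_⟩ <;> funext e <;> ext v <;> simp [smul_sub]

theorem alphaLinearMap_injective (h₂ : R₂.IsStable) :
    Function.Injective (alphaLinearMap R₁ R₂) :=
  (injective_iff_map_eq_zero _).mpr fun _ => eq_zero_of_alphaMap_eq_zero R₁ R₂ h₂

def betaLinearMap [Fintype Ω] [DecidableEq I] (eps : Ω → ℂ) :
    ELL s t V₁ W₁ V₂ W₂ →ₗ[ℂ] (∀ k, V₁ k →ₗ[ℂ] V₂ k) where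
  toFun x k := betaMap eps R₁ R₂ x k
  map_add' x y := by
    funext k
    ext v
    simp [betaMap, smul_add, Finset.sum_add_distrib]
    abel
  map_smul' c x := by
    funext k
    ext v
    simp [betaMap, Finset.smul_sum, smul_comm c]

theorem betaLinearMap_comp_alphaLinearMap [Fintype Ω] [DecidableEq I] {eps : Ω → ℂ}
    (hμ₁ : R₁.MuZero eps) (hμ₂ : R₂.MuZero eps) :
    betaLinearMap R₁ R₂ eps ∘ₗ alphaLinearMap R₁ R₂ = 0 := by
  refine LinearMap.ext fun ξ => funext fun k => ?_
  have hk₁ : R₁.moment eps k = 0 := hμ₁ k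
  have hk₂ : R₂.moment eps k = 0 := hμ₂ k
  simp [alphaLinearMap, betaLinearMap, betaMap_alphaMap, hk₁, hk₂]

variable [Fintype I] [Fintype Ω]

/-- The signs are those that make `β²¹` the transpose of `α¹²`
(`homTracePairing_betaLinearMap`). -/
def ellPairing (eps : Ω → ℂ) (y : ELL s t V₂ W₂ V₁ W₁) (x : ELL s t V₁ W₁ V₂ W₂) : ℂ :=
  ∑ e, eps e * (trace ℂ _ (y.2.1 e ∘ₗ x.1 e) - trace ℂ _ (y.1 e ∘ₗ x.2.1 e))
  + ∑ k, (trace ℂ _ (y.2.2.2 k ∘ₗ x.2.2.1 k) - trace ℂ _ (y.2.2.1 k ∘ₗ x.2.2.2 k))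

theorem eq_zero_of_forall_ellPairing_eq_zero [∀ k, FiniteDimensional ℂ (V₁ k)]
    [∀ k, FiniteDimensional ℂ (W₁ k)] {eps : Ω → ℂ} (heps : ∀ e, eps e ≠ 0)
    {y : ELL s t V₂ W₂ V₁ W₁} (h : ∀ x, ellPairing eps y x = 0) : y = 0 := by
  classical
  obtain ⟨yp, ym, yi, yj⟩ := y
  have hp := pi_eq_zero_of_forall_sum_trace_comp_eq_zero (fun e => eps e • ym e)
    fun C => by simpa [ellPairing, smul_comp] using h (C, 0, 0, 0)
  have hm := pi_eq_zero_of_forall_sum_trace_comp_eq_zero (fun e => eps e • yp e)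
    fun C => by simpa [ellPairing, smul_comp] using h (0, C, 0, 0)
  have hi := pi_eq_zero_of_forall_sum_trace_comp_eq_zero yj
    fun C => by simpa [ellPairing] using h (0, 0, C, 0)
  have hj := pi_eq_zero_of_forall_sum_trace_comp_eq_zero yi
    fun C => by simpa [ellPairing] using h (0, 0, 0, C)
  simp only [funext_iff, Pi.zero_apply, smul_eq_zero, heps, false_or] at hp hm
  simp [funext_iff, hp, hm, hi, hj]

theorem homTracePairing_betaLinearMap [DecidableEq I] [∀ k, FiniteDimensional ℂ (V₁ k)]
    [∀ k, FiniteDimensional ℂ (W₁ k)] (eps : Ω → ℂ)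
    (η : ∀ k, V₂ k →ₗ[ℂ] V₁ k) (x : ELL s t V₁ W₁ V₂ W₂) :
    homTracePairing V₁ V₂ η (betaLinearMap R₁ R₂ eps x) = ellPairing eps (alphaMap R₂ R₁ η) x := by
  simp only [homTracePairing, mk₂_apply, betaLinearMap, coe_mk, AddHom.coe_mk, betaMap, comp_add,
    comp_finsetSum, comp_smul, map_add, map_sum, map_smul, smul_eq_mul, Finset.sum_add_distrib]
  simp only [Fintype.sum_fiberwise_dep, lcast_rfl, id_comp, comp_id]
  simp only [ellPairing, alphaMap]
  have edge : ∀ e, eps e * trace ℂ _ (η (t e) ∘ₗ (R₂.Bp e ∘ₗ x.2.1 e + x.1 e ∘ₗ R₁.Bm e))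
        + -eps e * trace ℂ _ (η (s e) ∘ₗ (R₂.Bm e ∘ₗ x.1 e + x.2.1 e ∘ₗ R₁.Bp e))
      = eps e * (trace ℂ _ ((R₁.Bm e ∘ₗ η (t e) - η (s e) ∘ₗ R₂.Bm e) ∘ₗ x.1 e)
          - trace ℂ _ ((R₁.Bp e ∘ₗ η (s e) - η (t e) ∘ₗ R₂.Bp e) ∘ₗ x.2.1 e)) := by
    intro e
    simp only [sub_comp, comp_add, map_add, map_sub, comp_assoc]
    rw [trace_comp_comm' (η (t e) ∘ₗ x.1 e) (R₁.Bm e),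
      trace_comp_comm' (η (s e) ∘ₗ x.2.1 e) (R₁.Bp e)]
    simp only [comp_assoc]
    ring
  have vertex : ∀ k, trace ℂ _ (η k ∘ₗ R₂.i k ∘ₗ x.2.2.2 k) + trace ℂ _ (η k ∘ₗ x.2.2.1 k ∘ₗ R₁.j k)
      = trace ℂ _ ((R₁.j k ∘ₗ η k) ∘ₗ x.2.2.1 k) - trace ℂ _ ((-η k ∘ₗ R₂.i k) ∘ₗ x.2.2.2 k) := by
    intro k
    rw [comp_assoc, trace_comp_comm' (η k ∘ₗ x.2.2.1 k) (R₁.j k), neg_comp, map_neg, comp_assoc,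
      comp_assoc]
    ring
  rw [← Finset.sum_add_distrib, add_assoc, ← Finset.sum_add_distrib]
  simp only [edge, vertex]

theorem betaLinearMap_surjective [DecidableEq I] [∀ k, FiniteDimensional ℂ (V₁ k)]
    [∀ k, FiniteDimensional ℂ (W₁ k)] [∀ k, FiniteDimensional ℂ (V₂ k)]
    {eps : Ω → ℂ} (heps : ∀ e, eps e ≠ 0) (h₁ : R₁.IsStable) :
    Function.Surjective (betaLinearMap R₁ R₂ eps) :=
  surjective_of_forall_pairing_comp_eq_zero (homTracePairing V₁ V₂)
    (fun η hη => pi_eq_zero_of_forall_sum_trace_comp_eq_zero η (LinearMap.congr_fun hη))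
    (by simp only [finrank_pi_linearMap, mul_comm]) _
    fun η hη => eq_zero_of_alphaMap_eq_zero R₂ R₁ h₁ <| eq_zero_of_forall_ellPairing_eq_zero heps
      fun x => (homTracePairing_betaLinearMap R₁ R₂ eps η x).symm.trans (hη x)

theorem finrank_ELL [∀ k, FiniteDimensional ℂ (V₁ k)] [∀ k, FiniteDimensional ℂ (W₁ k)]
    [∀ k, FiniteDimensional ℂ (V₂ k)] [∀ k, FiniteDimensional ℂ (W₂ k)] :
    finrank ℂ (ELL s t V₁ W₁ V₂ W₂)
      = ∑ e, finrank ℂ (V₁ (s e)) * finrank ℂ (V₂ (t e))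
        + ∑ e, finrank ℂ (V₁ (t e)) * finrank ℂ (V₂ (s e))
        + ∑ k, finrank ℂ (W₁ k) * finrank ℂ (V₂ k)
        + ∑ k, finrank ℂ (V₁ k) * finrank ℂ (W₂ k) := by
  simp only [finrank_prod, finrank_pi_linearMap]
  ring

end

theorem sum_cartan_mul [Fintype I] [Fintype Ω] [DecidableEq I] {s t : Ω → I}
    (hloop : ∀ e, s e ≠ t e) (a b : I → ℤ) :
    ∑ k, ∑ l,
        (if k = l then (2 : ℤ)
          else -((Finset.univ.filter
            (fun e : Ω => (s e = k ∧ t e = l) ∨ (s e = l ∧ t e = k))).card : ℤ))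
        * a k * b l
      = 2 * ∑ k, a k * b k - ∑ e, (a (s e) * b (t e) + a (t e) * b (s e)) := by
  have entry : ∀ k l, (if k = l then (2 : ℤ)
        else -((Finset.univ.filter
          (fun e : Ω => (s e = k ∧ t e = l) ∨ (s e = l ∧ t e = k))).card : ℤ))
      = (if k = l then 2 else 0)
        - ∑ e, ((if s e = k ∧ t e = l then 1 else 0) + (if s e = l ∧ t e = k then 1 else 0)) := by
    intro k l
    by_cases hkl : k = l
    · subst hkl
      have hnot : ∀ e, ¬(s e = k ∧ t e = k) := fun e h => hloop e (h.1.trans h.2.symm)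
      simp [hnot]
    · rw [if_neg hkl, if_neg hkl, Finset.card_filter, zero_sub, Nat.cast_sum]
      congr 1
      refine Finset.sum_congr rfl fun e _ => ?_
      split_ifs <;> grind
  simp only [entry, sub_mul, Finset.sum_sub_distrib, ite_mul, zero_mul, add_mul,
    Finset.sum_add_distrib, Finset.sum_mul]
  simp_rw [Finset.sum_comm (s := (Finset.univ : Finset I)) (t := (Finset.univ : Finset Ω))]
  simp [ite_and, Finset.sum_ite_eq, Finset.mul_sum, mul_assoc]

/-- for stable framed representations `(B¹,i¹,j¹)`, `(B²,i²,j²)`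
with `μ = 0`, one has `β²¹ ∘ α²¹ = 0`, `α²¹` is injective, `β²¹` is
surjective, and
`dim (Ker β²¹ / Im α²¹) = ∑_k (dim V¹_k dim W²_k + dim W¹_k dim V²_k)
  − ∑_{k,l} c_{kl} dim V¹_k dim V²_l`,
where `c_{kk} = 2` and `c_{kl} = −#{edges joining k and l}` for `k ≠ l`. -/
theorem alpha_beta_complex_dim [Fintype I] [Fintype Ω] [DecidableEq I]
    {s t : Ω → I} (hloop : ∀ e, s e ≠ t e)
    (eps : Ω → ℂ) (heps : ∀ e, eps e ≠ 0)
    {V₁ W₁ V₂ W₂ : I → Type*}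
    [∀ k, AddCommGroup (V₁ k)] [∀ k, Module ℂ (V₁ k)]
    [∀ k, FiniteDimensional ℂ (V₁ k)]
    [∀ k, AddCommGroup (W₁ k)] [∀ k, Module ℂ (W₁ k)]
    [∀ k, FiniteDimensional ℂ (W₁ k)]
    [∀ k, AddCommGroup (V₂ k)] [∀ k, Module ℂ (V₂ k)]
    [∀ k, FiniteDimensional ℂ (V₂ k)]
    [∀ k, AddCommGroup (W₂ k)] [∀ k, Module ℂ (W₂ k)]
    [∀ k, FiniteDimensional ℂ (W₂ k)]
    (R₁ : FramedRep s t V₁ W₁) (R₂ : FramedRep s t V₂ W₂)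
    (h₁ : R₁.IsStable) (h₂ : R₂.IsStable)
    (hμ₁ : R₁.MuZero eps) (hμ₂ : R₂.MuZero eps) :
    ∃ (A : (∀ k, V₁ k →ₗ[ℂ] V₂ k) →ₗ[ℂ] ELL s t V₁ W₁ V₂ W₂)
      (Bl : ELL s t V₁ W₁ V₂ W₂ →ₗ[ℂ] (∀ k, V₁ k →ₗ[ℂ] V₂ k)),
      (∀ ξ, A ξ = alphaMap R₁ R₂ ξ) ∧
      (∀ x k, Bl x k = betaMap eps R₁ R₂ x k) ∧
      Bl ∘ₗ A = 0 ∧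
      Function.Injective A ∧
      Function.Surjective Bl ∧
      (Module.finrank ℂ
          (LinearMap.ker Bl ⧸
            (LinearMap.range A).comap (LinearMap.ker Bl).subtype) : ℤ)
        = (∑ k : I, ((Module.finrank ℂ (V₁ k) * Module.finrank ℂ (W₂ k)
              + Module.finrank ℂ (W₁ k) * Module.finrank ℂ (V₂ k) : ℕ) : ℤ))
          - ∑ k : I, ∑ l : I,
              (if k = l then (2 : ℤ)
                else -((Finset.univ.filter
                  (fun e : Ω => (s e = k ∧ t e = l) ∨ (s e = l ∧ t e = k))).card : ℤ))
              * (Module.finrank ℂ (V₁ k) : ℤ) * (Module.finrank ℂ (V₂ l) : ℤ) := by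
  have hcomplex := betaLinearMap_comp_alphaLinearMap R₁ R₂ hμ₁ hμ₂
  have hinj := alphaLinearMap_injective R₁ R₂ h₂
  have hsurj := betaLinearMap_surjective R₁ R₂ heps h₁
  refine ⟨_, _, fun _ => rfl, fun _ _ => rfl, hcomplex, hinj, hsurj, ?_⟩
  have hdim := finrank_quotient_comap_range_add_finrank _ _ hcomplex hinj hsurj
  rw [finrank_pi_linearMap, finrank_ELL] at hdim
  rw [sum_cartan_mul hloop]
  push_cast [Finset.sum_add_distrib]
  linarith [congrArg (Nat.cast : ℕ → ℤ) hdim]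
end
end
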